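/- arXiv:2512.10567 — 2 statements merged into one kernel-verified Lean document; each statement's English description precedes it below -/
import Mathlib

section
/- Let n ≥ 1 and q ∈ ℂ nonzero. Then 𝔥_n(q) is a free left module over the commutative subalgebra Algebra.adjoin ℂ {z_1, …, z_n}: the family of monomials y^b x^c := (∏_i y_i^{b_i})·(∏_i x_i^{c_i}), indexed by pairs (b, c) ∈ (Fin n → ℕ)², is a basis of 𝔥_n(q) as a left module over this subalgebra. -/
noncomputable section

open scoped BigOperators

namespace QHeisenberg

/-- Index type for the `3n` generators: `x`-, `y`-, and `z`-variables. -/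
abbrev GenIdx (n : ℕ) := Fin n ⊕ (Fin n ⊕ Fin n)

/-- The `x_i` generator in the free algebra. -/
def fX (n : ℕ) (i : Fin n) : FreeAlgebra ℂ (GenIdx n) := FreeAlgebra.ι ℂ (Sum.inl i)

/-- The `y_i` generator in the free algebra. -/
def fY (n : ℕ) (i : Fin n) : FreeAlgebra ℂ (GenIdx n) := FreeAlgebra.ι ℂ (Sum.inr (Sum.inl i))

/-- The `z_i` generator in the free algebra. -/
def fZ (n : ℕ) (i : Fin n) : FreeAlgebra ℂ (GenIdx n) := FreeAlgebra.ι ℂ (Sum.inr (Sum.inr i))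

/-- The defining relations of the q-Heisenberg algebra `𝔥_n(q)`. -/
inductive Rel (n : ℕ) (q : ℂ) :
    FreeAlgebra ℂ (GenIdx n) → FreeAlgebra ℂ (GenIdx n) → Prop
  | xx (i j : Fin n) : Rel n q (fX n i * fX n j) (fX n j * fX n i)
  | yy (i j : Fin n) : Rel n q (fY n i * fY n j) (fY n j * fY n i)
  | zz (i j : Fin n) : Rel n q (fZ n i * fZ n j) (fZ n j * fZ n i)
  | xz (i : Fin n) : Rel n q (fX n i * fZ n i) (q • (fZ n i * fX n i))
  | yz (i : Fin n) : Rel n q (fY n i * fZ n i) (q⁻¹ • (fZ n i * fY n i))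
  | xy (i : Fin n) : Rel n q (fX n i * fY n i) (q⁻¹ • (fY n i * fX n i) + fZ n i)
  | xyne (i j : Fin n) : i ≠ j → Rel n q (fX n i * fY n j) (fY n j * fX n i)
  | xzne (i j : Fin n) : i ≠ j → Rel n q (fX n i * fZ n j) (fZ n j * fX n i)
  | yzne (i j : Fin n) : i ≠ j → Rel n q (fY n i * fZ n j) (fZ n j * fY n i)

/-- The q-Heisenberg algebra `𝔥_n(q)`. -/
abbrev H (n : ℕ) (q : ℂ) := RingQuot (Rel n q)

/-- The generator `x_i` of `𝔥_n(q)`. -/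
def X (n : ℕ) (q : ℂ) (i : Fin n) : H n q := RingQuot.mkAlgHom ℂ (Rel n q) (fX n i)

/-- The generator `y_i` of `𝔥_n(q)`. -/
def Y (n : ℕ) (q : ℂ) (i : Fin n) : H n q := RingQuot.mkAlgHom ℂ (Rel n q) (fY n i)

/-- The generator `z_i` of `𝔥_n(q)`. -/
def Z (n : ℕ) (q : ℂ) (i : Fin n) : H n q := RingQuot.mkAlgHom ℂ (Rel n q) (fZ n i)

/-- `q` is not a root of unity: `q ^ k ≠ 1` for every `k ≥ 1`. -/
def NotRootOfUnity (q : ℂ) : Prop := ∀ k : ℕ, 1 ≤ k → q ^ k ≠ 1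

end QHeisenberg

namespace QHeisenberg

/-- Ordered product `f 0 * f 1 * ⋯ * f (n-1)`, taken in increasing order of the index. -/
def ordProd {A : Type*} [Monoid A] (n : ℕ) (f : Fin n → A) : A :=
  ((List.finRange n).map f).prod

/-- The (commutative) subalgebra of `𝔥_n(q)` generated by `z_1, …, z_n`. -/
def adjoinZ (n : ℕ) (q : ℂ) : Subalgebra ℂ (H n q) :=
  Algebra.adjoin ℂ (Set.range (Z n q))

end QHeisenberg


namespace QHeisenberg

/-! ## The model -/

abbrev Idx (n : ℕ) := (Fin n → ℕ) × (Fin n → ℕ) × (Fin n → ℕ)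
abbrev MM (n : ℕ) := Idx n →₀ ℂ

def δ {n : ℕ} (i : Fin n) : Fin n → ℕ := Pi.single i 1

def e {n : ℕ} (t : Idx n) : MM n := Finsupp.single t 1

def g2 (q : ℂ) (m : ℕ) : ℂ := ∑ j ∈ Finset.range m, q ^ (-2 * (j : ℤ))

@[simp] lemma g2_zero (q : ℂ) : g2 q 0 = 0 := Finset.sum_range_zero _

lemma g2_succ (q : ℂ) (m : ℕ) : g2 q (m + 1) = g2 q m + q ^ (-2 * (m : ℤ)) := by
  simp [g2, Finset.sum_range_succ]

lemma g2_succ' (q : ℂ) (hq : q ≠ 0) (m : ℕ) : g2 q (m + 1) = 1 + q ^ (-2 : ℤ) * g2 q m := by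
  rw [g2, Finset.sum_range_succ', add_comm]
  have h0 : q ^ (-2 * ((0:ℕ):ℤ)) = 1 := by norm_num
  rw [h0]
  congr 1
  rw [g2, Finset.mul_sum]
  refine Finset.sum_congr rfl fun j _ => ?_
  rw [← zpow_add₀ hq]
  congr 1
  push_cast
  ring

def opZ (n : ℕ) (i : Fin n) : MM n →ₗ[ℂ] MM n :=
  Finsupp.lmapDomain ℂ ℂ (fun t => (t.1 + δ i, t.2.1, t.2.2))

def opY (n : ℕ) (q : ℂ) (i : Fin n) : MM n →ₗ[ℂ] MM n :=
  Finsupp.lift (MM n) ℂ (Idx n) fun t =>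
    (q ^ (-(t.1 i : ℤ))) • e (t.1, t.2.1 + δ i, t.2.2)

def opX (n : ℕ) (q : ℂ) (i : Fin n) : MM n →ₗ[ℂ] MM n :=
  Finsupp.lift (MM n) ℂ (Idx n) fun t =>
    (q ^ ((t.1 i : ℤ) - (t.2.1 i : ℤ))) • e (t.1, t.2.1, t.2.2 + δ i)
      + (q ^ (t.1 i : ℤ) * g2 q (t.2.1 i)) • e (t.1 + δ i, t.2.1 - δ i, t.2.2)

@[simp] lemma opZ_e {n : ℕ} (i : Fin n) (a b c : Fin n → ℕ) :
    opZ n i (e (a, b, c)) = e (a + δ i, b, c) := by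
  simp [opZ, e, Finsupp.mapDomain_single]

@[simp] lemma opY_e {n : ℕ} (q : ℂ) (i : Fin n) (a b c : Fin n → ℕ) :
    opY n q i (e (a, b, c)) = (q ^ (-(a i : ℤ))) • e (a, b + δ i, c) := by
  rw [opY, Finsupp.lift_apply, e, Finsupp.sum_single_index] <;> simp

@[simp] lemma opX_e {n : ℕ} (q : ℂ) (i : Fin n) (a b c : Fin n → ℕ) :
    opX n q i (e (a, b, c)) =
      (q ^ ((a i : ℤ) - (b i : ℤ))) • e (a, b, c + δ i)
        + (q ^ (a i : ℤ) * g2 q (b i)) • e (a + δ i, b - δ i, c) := by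
  rw [opX, Finsupp.lift_apply, e, Finsupp.sum_single_index] <;> simp

lemma endoExt {n : ℕ} {φ ψ : MM n →ₗ[ℂ] MM n} (h : ∀ t, φ (e t) = ψ (e t)) : φ = ψ :=
  Finsupp.lhom_ext fun t r => by
    have ht : (Finsupp.single t r : MM n) = r • e t := by
      simp [e, Finsupp.smul_single]
    rw [ht, map_smul, map_smul, h]

end QHeisenberg

namespace QHeisenberg

variable {n : ℕ}

lemma add_δ_same (a : Fin n → ℕ) (i : Fin n) : (a + δ i) i = a i + 1 := by
  simp [δ]

lemma add_δ_ne {i j : Fin n} (h : j ≠ i) (a : Fin n → ℕ) : (a + δ i) j = a j := by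
  simp [δ, Pi.single_eq_of_ne h]

lemma sub_δ_same (a : Fin n → ℕ) (i : Fin n) : (a - δ i) i = a i - 1 := by
  simp [δ]

lemma sub_δ_ne {i j : Fin n} (h : j ≠ i) (a : Fin n → ℕ) : (a - δ i) j = a j := by
  simp [δ, Pi.single_eq_of_ne h]

lemma add_δ_comm (a : Fin n → ℕ) (i j : Fin n) : a + δ i + δ j = a + δ j + δ i :=
  add_right_comm _ _ _

lemma sub_δ_comm (a : Fin n → ℕ) (i j : Fin n) : a - δ i - δ j = a - δ j - δ i := by
  funext k
  simp only [Pi.sub_apply]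
  omega

lemma add_sub_δ_comm (a : Fin n → ℕ) {i j : Fin n} (h : i ≠ j) :
    a + δ i - δ j = a - δ j + δ i := by
  funext k
  simp only [Pi.sub_apply, Pi.add_apply, δ, Pi.single_apply]
  rcases eq_or_ne k i with rfl | hk <;> rcases eq_or_ne k j with rfl | hk2 <;>
    simp_all

lemma add_sub_δ_cancel (a : Fin n → ℕ) (i : Fin n) : a + δ i - δ i = a := by
  funext k
  simp only [Pi.sub_apply, Pi.add_apply]
  omega

lemma sub_add_δ_cancel {a : Fin n → ℕ} {i : Fin n} (h : 1 ≤ a i) : a - δ i + δ i = a := by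
  funext k
  simp only [Pi.sub_apply, Pi.add_apply, δ, Pi.single_apply]
  rcases eq_or_ne k i with rfl | hk <;> simp_all

section Rels
variable {q : ℂ}

lemma rel_zz (i j : Fin n) : opZ n i * opZ n j = opZ n j * opZ n i := by
  apply endoExt
  rintro ⟨a, b, c⟩
  simp only [Module.End.mul_apply, opZ_e, add_δ_comm]

lemma rel_yy (i j : Fin n) : opY n q i * opY n q j = opY n q j * opY n q i := by
  rcases eq_or_ne i j with rfl | hij
  · rfl
  apply endoExt
  rintro ⟨a, b, c⟩
  simp only [Module.End.mul_apply, opY_e, map_smul, add_δ_comm, smul_smul,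
    add_δ_ne hij, add_δ_ne hij.symm]
  rw [mul_comm]

lemma rel_xx (hq : q ≠ 0) (i j : Fin n) :
    opX n q i * opX n q j = opX n q j * opX n q i := by
  rcases eq_or_ne i j with rfl | hij
  · rfl
  apply endoExt
  rintro ⟨a, b, c⟩
  simp only [Module.End.mul_apply, opX_e, map_add, map_smul,
    add_δ_ne hij, add_δ_ne hij.symm, sub_δ_ne hij, sub_δ_ne hij.symm]
  rw [add_δ_comm c j i, add_δ_comm a j i, sub_δ_comm b j i]
  module

lemma rel_xz (hq : q ≠ 0) (i : Fin n) :
    opX n q i * opZ n i = q • (opZ n i * opX n q i) := by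
  have h1 : ∀ x : ℤ, q ^ x ≠ 0 := fun x => zpow_ne_zero x hq
  apply endoExt
  rintro ⟨a, b, c⟩
  simp only [Module.End.mul_apply, LinearMap.smul_apply, opZ_e, opX_e, map_add, map_smul,
    add_δ_same]
  match_scalars <;>
  · push_cast
    simp only [inv_pow, inv_zpow, ← zpow_natCast q, zpow_sub₀ hq, zpow_add₀ hq, zpow_neg,
      zpow_one, zpow_zero]
    field_simp [h1]
    try simp only [zpow_add₀ hq, zpow_one, zpow_ofNat]
    try ring

lemma rel_yz (hq : q ≠ 0) (i : Fin n) :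
    opY n q i * opZ n i = q⁻¹ • (opZ n i * opY n q i) := by
  have h1 : ∀ x : ℤ, q ^ x ≠ 0 := fun x => zpow_ne_zero x hq
  apply endoExt
  rintro ⟨a, b, c⟩
  simp only [Module.End.mul_apply, LinearMap.smul_apply, opZ_e, opY_e, map_smul,
    add_δ_same]
  match_scalars <;>
  · push_cast
    simp only [inv_pow, inv_zpow, ← zpow_natCast q, zpow_sub₀ hq, zpow_add₀ hq, zpow_neg,
      zpow_one, zpow_zero]
    field_simp [h1]
    try simp only [zpow_add₀ hq, zpow_one, zpow_ofNat]
    try ring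

lemma rel_xzne (hq : q ≠ 0) {i j : Fin n} (hij : i ≠ j) :
    opX n q i * opZ n j = opZ n j * opX n q i := by
  apply endoExt
  rintro ⟨a, b, c⟩
  simp only [Module.End.mul_apply, opZ_e, opX_e, map_add, map_smul,
    add_δ_ne hij, add_δ_ne hij.symm, sub_δ_ne hij, sub_δ_ne hij.symm]
  rw [add_δ_comm a j i]

lemma rel_yzne (hq : q ≠ 0) {i j : Fin n} (hij : i ≠ j) :
    opY n q i * opZ n j = opZ n j * opY n q i := by
  apply endoExt
  rintro ⟨a, b, c⟩
  simp only [Module.End.mul_apply, opZ_e, opY_e, map_smul, add_δ_ne hij, add_δ_ne hij.symm]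

lemma rel_xyne (hq : q ≠ 0) {i j : Fin n} (hij : i ≠ j) :
    opX n q i * opY n q j = opY n q j * opX n q i := by
  apply endoExt
  rintro ⟨a, b, c⟩
  simp only [Module.End.mul_apply, opY_e, opX_e, map_add, map_smul,
    add_δ_ne hij, add_δ_ne hij.symm, sub_δ_ne hij, sub_δ_ne hij.symm, smul_add, smul_smul]
  rw [add_sub_δ_comm b hij.symm]
  module

lemma rel_xy (hq : q ≠ 0) (i : Fin n) :
    opX n q i * opY n q i = q⁻¹ • (opY n q i * opX n q i) + opZ n i := by
  have h1 : ∀ x : ℤ, q ^ x ≠ 0 := fun x => zpow_ne_zero x hq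
  apply endoExt
  rintro ⟨a, b, c⟩
  simp only [Module.End.mul_apply, LinearMap.smul_apply, LinearMap.add_apply, opZ_e, opY_e,
    opX_e, map_add, map_smul, add_δ_same, add_sub_δ_cancel]
  rcases Nat.eq_zero_or_pos (b i) with hb | hb
  · have hbd : b - δ i = b := by
      funext k
      simp only [Pi.sub_apply, δ, Pi.single_apply]
      rcases eq_or_ne k i with rfl | hk <;> simp_all
    rw [hbd, hb, g2_succ' q hq 0, g2_zero]
    match_scalars <;>
    · push_cast [hb]
      simp only [inv_pow, inv_zpow, ← zpow_natCast q, zpow_sub₀ hq, zpow_add₀ hq, zpow_neg,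
        zpow_one, zpow_zero]
      field_simp [h1]
      try simp only [zpow_add₀ hq, zpow_one, zpow_ofNat]
      try ring
  · rw [sub_add_δ_cancel hb, g2_succ' q hq (b i)]
    match_scalars <;>
    · push_cast
      simp only [inv_pow, inv_zpow, ← zpow_natCast q, zpow_sub₀ hq, zpow_add₀ hq, zpow_neg,
        zpow_one, zpow_zero]
      field_simp [h1]
      try simp only [zpow_add₀ hq, zpow_one, zpow_ofNat]
      try ring

end Rels

end QHeisenberg

namespace QHeisenberg

def act (n : ℕ) (q : ℂ) : FreeAlgebra ℂ (GenIdx n) →ₐ[ℂ] Module.End ℂ (MM n) :=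
  FreeAlgebra.lift ℂ (Sum.elim (fun i => opX n q i) (Sum.elim (fun i => opY n q i) (fun i => opZ n i)))

@[simp] lemma act_fX (n : ℕ) (q : ℂ) (i : Fin n) : act n q (fX n i) = opX n q i := by
  simp [act, fX]
@[simp] lemma act_fY (n : ℕ) (q : ℂ) (i : Fin n) : act n q (fY n i) = opY n q i := by
  simp [act, fY]
@[simp] lemma act_fZ (n : ℕ) (q : ℂ) (i : Fin n) : act n q (fZ n i) = opZ n i := by
  simp [act, fZ]

lemma act_rel (n : ℕ) (q : ℂ) (hq : q ≠ 0) :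
    ∀ ⦃u v : FreeAlgebra ℂ (GenIdx n)⦄, Rel n q u v → act n q u = act n q v := by
  rintro u v r
  induction r with
  | xx i j => simp only [map_mul, act_fX]; exact rel_xx hq i j
  | yy i j => simp only [map_mul, act_fY]; exact rel_yy i j
  | zz i j => simp only [map_mul, act_fZ]; exact rel_zz i j
  | xz i => simp only [map_mul, map_smul, act_fX, act_fZ]; exact rel_xz hq i
  | yz i => simp only [map_mul, map_smul, act_fY, act_fZ]; exact rel_yz hq i
  | xy i =>
      simp only [map_mul, map_add, map_smul, act_fX, act_fY, act_fZ]
      exact rel_xy hq i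
  | xyne i j h => simp only [map_mul, act_fX, act_fY]; exact rel_xyne hq h
  | xzne i j h => simp only [map_mul, act_fX, act_fZ]; exact rel_xzne hq h
  | yzne i j h => simp only [map_mul, act_fY, act_fZ]; exact rel_yzne hq h

def rho (n : ℕ) (q : ℂ) (hq : q ≠ 0) : H n q →ₐ[ℂ] Module.End ℂ (MM n) :=
  RingQuot.liftAlgHom ℂ ⟨act n q, act_rel n q hq⟩

@[simp] lemma rho_X (n : ℕ) (q : ℂ) (hq : q ≠ 0) (i : Fin n) :
    rho n q hq (X n q i) = opX n q i := by
  rw [rho, X, RingQuot.liftAlgHom_mkAlgHom_apply, act_fX]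

@[simp] lemma rho_Y (n : ℕ) (q : ℂ) (hq : q ≠ 0) (i : Fin n) :
    rho n q hq (Y n q i) = opY n q i := by
  rw [rho, Y, RingQuot.liftAlgHom_mkAlgHom_apply, act_fY]

@[simp] lemma rho_Z (n : ℕ) (q : ℂ) (hq : q ≠ 0) (i : Fin n) :
    rho n q hq (Z n q i) = opZ n i := by
  rw [rho, Z, RingQuot.liftAlgHom_mkAlgHom_apply, act_fZ]

end QHeisenberg

namespace QHeisenberg

section Hside
variable {n : ℕ} {q : ℂ}

lemma hXX (i j : Fin n) : X n q i * X n q j = X n q j * X n q i := by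
  simpa only [X, map_mul] using RingQuot.mkAlgHom_rel ℂ (Rel.xx (n := n) (q := q) i j)

lemma hYY (i j : Fin n) : Y n q i * Y n q j = Y n q j * Y n q i := by
  simpa only [Y, map_mul] using RingQuot.mkAlgHom_rel ℂ (Rel.yy (n := n) (q := q) i j)

lemma hZZ (i j : Fin n) : Z n q i * Z n q j = Z n q j * Z n q i := by
  simpa only [Z, map_mul] using RingQuot.mkAlgHom_rel ℂ (Rel.zz (n := n) (q := q) i j)

lemma hXZ (i : Fin n) : X n q i * Z n q i = q • (Z n q i * X n q i) := by
  simpa only [X, Z, map_mul, map_smul] using RingQuot.mkAlgHom_rel ℂ (Rel.xz (n := n) (q := q) i)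

lemma hYZ (i : Fin n) : Y n q i * Z n q i = q⁻¹ • (Z n q i * Y n q i) := by
  simpa only [Y, Z, map_mul, map_smul] using RingQuot.mkAlgHom_rel ℂ (Rel.yz (n := n) (q := q) i)

lemma hXY (i : Fin n) : X n q i * Y n q i = q⁻¹ • (Y n q i * X n q i) + Z n q i := by
  simpa only [X, Y, Z, map_mul, map_add, map_smul] using
    RingQuot.mkAlgHom_rel ℂ (Rel.xy (n := n) (q := q) i)

lemma hXYne {i j : Fin n} (h : i ≠ j) : X n q i * Y n q j = Y n q j * X n q i := by
  simpa only [X, Y, map_mul] using RingQuot.mkAlgHom_rel ℂ (Rel.xyne (n := n) (q := q) i j h)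

lemma hXZne {i j : Fin n} (h : i ≠ j) : X n q i * Z n q j = Z n q j * X n q i := by
  simpa only [X, Z, map_mul] using RingQuot.mkAlgHom_rel ℂ (Rel.xzne (n := n) (q := q) i j h)

lemma hYZne {i j : Fin n} (h : i ≠ j) : Y n q i * Z n q j = Z n q j * Y n q i := by
  simpa only [Y, Z, map_mul] using RingQuot.mkAlgHom_rel ℂ (Rel.yzne (n := n) (q := q) i j h)

lemma hZY (hq : q ≠ 0) (i : Fin n) : Z n q i * Y n q i = q • (Y n q i * Z n q i) := by
  have h := hYZ (q := q) i
  have : q • (Y n q i * Z n q i) = q • (q⁻¹ • (Z n q i * Y n q i)) := by rw [← h]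
  rw [this, smul_smul, mul_inv_cancel₀ hq, one_smul]

lemma cXZ {i j : Fin n} (h : i ≠ j) : Commute (X n q i) (Z n q j) := hXZne h
lemma cYZ {i j : Fin n} (h : i ≠ j) : Commute (Y n q i) (Z n q j) := hYZne h
lemma cXY {i j : Fin n} (h : i ≠ j) : Commute (X n q i) (Y n q j) := hXYne h
lemma cZZ (i j : Fin n) : Commute (Z n q i) (Z n q j) := hZZ i j
lemma cYY (i j : Fin n) : Commute (Y n q i) (Y n q j) := hYY i j
lemma cXX (i j : Fin n) : Commute (X n q i) (X n q j) := hXX i j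

lemma swap_pow {g f : H n q} {s : ℂ} (h : g * f = s • (f * g)) :
    ∀ k : ℕ, g * f ^ k = s ^ k • (f ^ k * g)
  | 0 => by simp
  | k + 1 => by
    rw [pow_succ, ← mul_assoc, swap_pow h k, smul_mul_assoc, mul_assoc, h, mul_smul_comm,
      smul_smul, pow_succ, ← mul_assoc]

/-- blocks -/
def zb (n : ℕ) (q : ℂ) (a : Fin n → ℕ) : H n q := ordProd n fun j => Z n q j ^ a j
def yb (n : ℕ) (q : ℂ) (b : Fin n → ℕ) : H n q := ordProd n fun j => Y n q j ^ b j
def xb (n : ℕ) (q : ℂ) (c : Fin n → ℕ) : H n q := ordProd n fun j => X n q j ^ c j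

def mon (n : ℕ) (q : ℂ) (a b c : Fin n → ℕ) : H n q := zb n q a * (yb n q b * xb n q c)

lemma finRange_split (i : Fin n) :
    ∃ L₁ L₂ : List (Fin n), List.finRange n = L₁ ++ i :: L₂ ∧
      (∀ j ∈ L₁, j ≠ i) ∧ (∀ j ∈ L₂, j ≠ i) := by
  obtain ⟨L₁, L₂, h⟩ := List.append_of_mem (List.mem_finRange i)
  have hnd := List.nodup_finRange n
  rw [h, List.nodup_append] at hnd
  obtain ⟨h1, h2, h3⟩ := hnd
  refine ⟨L₁, L₂, h, ?_, ?_⟩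
  · intro j hj hji
    subst hji
    exact h3 _ hj _ List.mem_cons_self rfl
  · intro j hj hji
    subst hji
    exact (List.nodup_cons.mp h2).1 hj

lemma ordProd_split {A : Type*} [Monoid A] (f : Fin n → A) {i : Fin n} {L₁ L₂ : List (Fin n)}
    (h : List.finRange n = L₁ ++ i :: L₂) :
    ordProd n f = (L₁.map f).prod * (f i * (L₂.map f).prod) := by
  rw [ordProd, h, List.map_append, List.prod_append, List.map_cons, List.prod_cons]

lemma commute_listProd {g : H n q} {f : Fin n → H n q} {L : List (Fin n)}
    (h : ∀ j ∈ L, Commute g (f j)) : Commute g (L.map f).prod :=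
  Commute.list_prod_right _ _ fun x hx => by
    obtain ⟨j, hj, rfl⟩ := List.mem_map.mp hx
    exact h j hj

/-- pass a generator from left to right through an ordered product -/
lemma pass_ord (g : H n q) (f : Fin n → H n q) (i : Fin n) (s : ℂ)
    (hc : ∀ j, j ≠ i → Commute g (f j)) (hi : g * f i = s • (f i * g)) :
    g * ordProd n f = s • (ordProd n f * g) := by
  obtain ⟨L₁, L₂, hsp, h1, h2⟩ := finRange_split i
  rw [ordProd_split f hsp]
  have c1 : Commute g (L₁.map f).prod := commute_listProd fun j hj => hc j (h1 j hj)
  have c2 : Commute g (L₂.map f).prod := commute_listProd fun j hj => hc j (h2 j hj)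
  calc g * ((L₁.map f).prod * (f i * (L₂.map f).prod))
      = ((g * (L₁.map f).prod) * f i) * (L₂.map f).prod := by
        simp only [mul_assoc]
    _ = (((L₁.map f).prod * (g * f i))) * (L₂.map f).prod := by
        rw [c1.eq]
        simp only [mul_assoc]
    _ = ((L₁.map f).prod * (s • (f i * g))) * (L₂.map f).prod := by rw [hi]
    _ = s • ((L₁.map f).prod * (f i * (g * (L₂.map f).prod))) := by
        simp only [smul_mul_assoc, mul_smul_comm, mul_assoc]
    _ = s • ((L₁.map f).prod * (f i * ((L₂.map f).prod * g))) := by rw [c2.eq]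
    _ = s • ((L₁.map f).prod * (f i * (L₂.map f).prod) * g) := by
        simp only [mul_assoc]

/-- multiply a commuting-family generator into an ordered product of powers -/
lemma mul_ord_pow (F : Fin n → H n q) (hcomm : ∀ j k, Commute (F j) (F k)) (i : Fin n)
    (a : Fin n → ℕ) :
    F i * ordProd n (fun j => F j ^ a j) = ordProd n (fun j => F j ^ (a + δ i) j) := by
  obtain ⟨L₁, L₂, hsp, h1, h2⟩ := finRange_split i
  rw [ordProd_split (fun j => F j ^ a j) hsp, ordProd_split (fun j => F j ^ (a + δ i) j) hsp]
  have e1 : L₁.map (fun j => F j ^ (a + δ i) j) = L₁.map (fun j => F j ^ a j) :=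
    List.map_congr_left fun j hj => by rw [add_δ_ne (h1 j hj)]
  have e2 : L₂.map (fun j => F j ^ (a + δ i) j) = L₂.map (fun j => F j ^ a j) :=
    List.map_congr_left fun j hj => by rw [add_δ_ne (h2 j hj)]
  have c1 : Commute (F i) (L₁.map fun j => F j ^ a j).prod :=
    commute_listProd fun j _ => (hcomm i j).pow_right _
  rw [e1, e2, add_δ_same, ← mul_assoc, c1.eq, mul_assoc, ← mul_assoc (F i), ← pow_succ']

lemma zb_succ (i : Fin n) (a : Fin n → ℕ) :
    Z n q i * zb n q a = zb n q (a + δ i) :=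
  mul_ord_pow _ (fun j k => (hZZ j k)) i a

lemma yb_succ (i : Fin n) (b : Fin n → ℕ) :
    Y n q i * yb n q b = yb n q (b + δ i) :=
  mul_ord_pow _ (fun j k => (hYY j k)) i b

lemma xb_succ (i : Fin n) (c : Fin n → ℕ) :
    X n q i * xb n q c = xb n q (c + δ i) :=
  mul_ord_pow _ (fun j k => (hXX j k)) i c

lemma X_zb (i : Fin n) (a : Fin n → ℕ) :
    X n q i * zb n q a = (q ^ (a i : ℤ)) • (zb n q a * X n q i) := by
  refine pass_ord _ _ i _ (fun j hj => ?_) ?_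
  · exact Commute.pow_right (cXZ (Ne.symm hj)) (a j)
  · rw [zpow_natCast]
    exact swap_pow (hXZ i) (a i)

lemma Y_zb (i : Fin n) (a : Fin n → ℕ) :
    Y n q i * zb n q a = (q ^ (-(a i : ℤ))) • (zb n q a * Y n q i) := by
  refine pass_ord _ _ i _ (fun j hj => ?_) ?_
  · exact Commute.pow_right (cYZ (Ne.symm hj)) (a j)
  · rw [zpow_neg, zpow_natCast, ← inv_pow]
    exact swap_pow (hYZ i) (a i)

end Hside

end QHeisenberg

namespace QHeisenberg

section Straighten
variable {n : ℕ} {q : ℂ}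

/-- Key q-commutation: `x_i y_i^m = q^{-m} y_i^m x_i + c_m y_i^{m-1} z_i`. -/
lemma X_Ypow (hq : q ≠ 0) (i : Fin n) (m : ℕ) :
    X n q i * Y n q i ^ m =
      (q ^ (-(m : ℤ))) • (Y n q i ^ m * X n q i)
        + (g2 q m * q ^ ((m : ℤ) - 1)) • (Y n q i ^ (m - 1) * Z n q i) := by
  have h1 : ∀ x : ℤ, q ^ x ≠ 0 := fun x => zpow_ne_zero x hq
  induction m with
  | zero => simp
  | succ m ih =>
    rcases Nat.eq_zero_or_pos m with rfl | hm
    · have hg : g2 q 1 = 1 := by simp [g2]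
      simpa [hg] using hXY i
    · have hkk : m - 1 + 1 = m := by omega
      have s1 : q ^ (-(m : ℤ)) * q⁻¹ = q ^ (-((m : ℤ) + 1)) := by
        rw [← zpow_neg_one q, ← zpow_add₀ hq]
        congr 1
        ring
      have e1 : q ^ ((m : ℤ) - 1) * q = q ^ (m : ℤ) := by
        rw [zpow_sub₀ hq, zpow_one]
        field_simp
      have s2 : q ^ (-(m : ℤ)) + g2 q m * q ^ ((m : ℤ) - 1) * q
          = g2 q (m + 1) * q ^ ((m : ℤ) + 1 - 1) := by
        rw [g2_succ, add_mul, mul_assoc, e1]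
        have e2 : ((m : ℤ) + 1 - 1) = (m : ℤ) := by ring
        rw [e2, ← zpow_add₀ hq]
        have e3 : (-2 * (m : ℤ) + (m : ℤ)) = -(m : ℤ) := by ring
        rw [e3, add_comm]
      have hcast : ((m + 1 : ℕ) : ℤ) = (m : ℤ) + 1 := by push_cast; ring
      rw [show (m + 1 - 1 : ℕ) = m from rfl, hcast]
      calc X n q i * Y n q i ^ (m + 1)
          = (X n q i * Y n q i ^ m) * Y n q i := by rw [pow_succ, mul_assoc]
        _ = ((q ^ (-(m : ℤ))) • (Y n q i ^ m * X n q i)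
              + (g2 q m * q ^ ((m : ℤ) - 1)) • (Y n q i ^ (m - 1) * Z n q i)) * Y n q i := by
            rw [ih]
        _ = (q ^ (-(m : ℤ))) • (Y n q i ^ m * (X n q i * Y n q i))
              + (g2 q m * q ^ ((m : ℤ) - 1)) • (Y n q i ^ (m - 1) * (Z n q i * Y n q i)) := by
            simp only [add_mul, smul_mul_assoc, mul_assoc]
        _ = (q ^ (-(m : ℤ))) • (Y n q i ^ m * (q⁻¹ • (Y n q i * X n q i) + Z n q i))
              + (g2 q m * q ^ ((m : ℤ) - 1)) • (Y n q i ^ (m - 1) * (q • (Y n q i * Z n q i))) := by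
            rw [hXY i, hZY hq i]
        _ = (q ^ (-(m : ℤ)) * q⁻¹) • (Y n q i ^ (m + 1) * X n q i)
              + ((q ^ (-(m : ℤ))) • (Y n q i ^ m * Z n q i)
              + (g2 q m * q ^ ((m : ℤ) - 1) * q) • (Y n q i ^ (m - 1 + 1) * Z n q i)) := by
            simp only [mul_add, mul_smul_comm, smul_smul, smul_add, pow_succ, mul_assoc,
              add_assoc]
        _ = (q ^ (-((m : ℤ) + 1))) • (Y n q i ^ (m + 1) * X n q i)
              + (g2 q (m + 1) * q ^ ((m : ℤ) + 1 - 1)) • (Y n q i ^ m * Z n q i) := by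
            rw [hkk, s1, ← add_smul, s2]

lemma swap_pow' {g f : H n q} {s : ℂ} (h : f * g = s • (g * f)) :
    ∀ k : ℕ, f ^ k * g = s ^ k • (g * f ^ k)
  | 0 => by simp
  | k + 1 => by
    rw [pow_succ', mul_assoc, swap_pow' h k, mul_smul_comm, ← mul_assoc, h, smul_mul_assoc,
      smul_smul, mul_assoc, ← pow_succ', ← pow_succ]

lemma X_yb (hq : q ≠ 0) (i : Fin n) (b : Fin n → ℕ) :
    X n q i * yb n q b =
      (q ^ (-(b i : ℤ))) • (yb n q b * X n q i)
        + (g2 q (b i) * q ^ ((b i : ℤ) - 1) * q ^ (-((b i - 1 : ℕ) : ℤ)))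
            • (Z n q i * yb n q (b - δ i)) := by
  obtain ⟨L₁, L₂, hsp, h1, h2⟩ := finRange_split i
  set P1 := (L₁.map fun j => Y n q j ^ b j).prod with hP1
  set P2 := (L₂.map fun j => Y n q j ^ b j).prod with hP2
  have hyb : yb n q b = P1 * (Y n q i ^ b i * P2) := ordProd_split _ hsp
  have hyb' : yb n q (b - δ i) = P1 * (Y n q i ^ (b i - 1) * P2) := by
    rw [yb, ordProd_split _ hsp, sub_δ_same]
    congr 2
    · exact List.map_congr_left fun j hj => by rw [sub_δ_ne (h1 j hj)]
    congr 1
    exact List.map_congr_left fun j hj => by rw [sub_δ_ne (h2 j hj)]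
  have cX1 : Commute (X n q i) P1 :=
    commute_listProd fun j hj => (cXY (Ne.symm (h1 j hj))).pow_right _
  have cX2 : Commute (X n q i) P2 :=
    commute_listProd fun j hj => (cXY (Ne.symm (h2 j hj))).pow_right _
  have cZ1 : Commute (Z n q i) P1 :=
    commute_listProd fun j hj => ((cYZ (h1 j hj)).symm).pow_right _
  have cZ2 : Commute (Z n q i) P2 :=
    commute_listProd fun j hj => ((cYZ (h2 j hj)).symm).pow_right _
  have hswapZ : Y n q i ^ (b i - 1) * Z n q i
      = (q ^ (-((b i - 1 : ℕ) : ℤ))) • (Z n q i * Y n q i ^ (b i - 1)) := by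
    rw [zpow_neg, zpow_natCast, ← inv_pow]
    exact swap_pow' (hYZ i) (b i - 1)
  calc X n q i * yb n q b
      = P1 * ((X n q i * Y n q i ^ b i) * P2) := by
        rw [hyb, ← mul_assoc, cX1.eq]
        simp only [mul_assoc]
    _ = P1 * ((((q ^ (-(b i : ℤ))) • (Y n q i ^ b i * X n q i)
          + (g2 q (b i) * q ^ ((b i : ℤ) - 1)) • (Y n q i ^ (b i - 1) * Z n q i))) * P2) := by
        rw [X_Ypow hq i (b i)]
    _ = (q ^ (-(b i : ℤ))) • (P1 * (Y n q i ^ b i * (X n q i * P2)))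
          + (g2 q (b i) * q ^ ((b i : ℤ) - 1)) • (P1 * ((Y n q i ^ (b i - 1) * Z n q i) * P2)) := by
        simp only [add_mul, smul_mul_assoc, mul_add, mul_smul_comm, mul_assoc]
    _ = (q ^ (-(b i : ℤ))) • (yb n q b * X n q i)
          + (g2 q (b i) * q ^ ((b i : ℤ) - 1)) • (P1 * ((Y n q i ^ (b i - 1) * Z n q i) * P2)) := by
        rw [cX2.eq, hyb]
        simp only [mul_assoc]
    _ = (q ^ (-(b i : ℤ))) • (yb n q b * X n q i)
          + (g2 q (b i) * q ^ ((b i : ℤ) - 1) * q ^ (-((b i - 1 : ℕ) : ℤ)))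
              • (P1 * (Z n q i * (Y n q i ^ (b i - 1) * P2))) := by
        rw [hswapZ]
        simp only [smul_mul_assoc, mul_smul_comm, smul_smul, mul_assoc]
    _ = (q ^ (-(b i : ℤ))) • (yb n q b * X n q i)
          + (g2 q (b i) * q ^ ((b i : ℤ) - 1) * q ^ (-((b i - 1 : ℕ) : ℤ)))
              • (Z n q i * yb n q (b - δ i)) := by
        rw [hyb', ← mul_assoc, ← cZ1.eq]
        simp only [mul_assoc]

end Straighten

end QHeisenberg

namespace QHeisenberg

section CMon
variable {n : ℕ} {q : ℂ}

lemma Z_zb_comm (i : Fin n) (a : Fin n → ℕ) :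
    Commute (Z n q i) (zb n q a) :=
  commute_listProd fun j _ => (cZZ i j).pow_right _

lemma Z_mon (i : Fin n) (a b c : Fin n → ℕ) :
    Z n q i * mon n q a b c = mon n q (a + δ i) b c := by
  rw [mon, mon, ← mul_assoc, zb_succ]

lemma Y_mon (i : Fin n) (a b c : Fin n → ℕ) :
    Y n q i * mon n q a b c = (q ^ (-(a i : ℤ))) • mon n q a (b + δ i) c := by
  rw [mon, ← mul_assoc, Y_zb, smul_mul_assoc, mul_assoc, ← mul_assoc (Y n q i), yb_succ, mon]

lemma X_mon (hq : q ≠ 0) (i : Fin n) (a b c : Fin n → ℕ) :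
    X n q i * mon n q a b c =
      (q ^ ((a i : ℤ) - (b i : ℤ))) • mon n q a b (c + δ i)
        + (q ^ (a i : ℤ) * g2 q (b i)) • mon n q (a + δ i) (b - δ i) c := by
  have scal : g2 q (b i) * q ^ ((b i : ℤ) - 1) * q ^ (-((b i - 1 : ℕ) : ℤ)) = g2 q (b i) := by
    rcases Nat.eq_zero_or_pos (b i) with hb | hb
    · rw [hb]; simp
    · obtain ⟨m, hm⟩ := Nat.exists_eq_add_of_le hb
      rw [hm]
      rw [mul_assoc, ← zpow_add₀ hq]
      have : ((1 + m : ℕ) : ℤ) - 1 + -(((1 + m - 1 : ℕ) : ℤ)) = 0 := by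
        push_cast
        omega
      rw [this, zpow_zero, mul_one]
  calc X n q i * mon n q a b c
      = (X n q i * zb n q a) * (yb n q b * xb n q c) := by rw [mon, mul_assoc]
    _ = (q ^ (a i : ℤ)) • (zb n q a * ((X n q i * yb n q b) * xb n q c)) := by
        rw [X_zb, smul_mul_assoc]
        simp only [mul_assoc]
    _ = (q ^ (a i : ℤ)) • (zb n q a *
          ((((q ^ (-(b i : ℤ))) • (yb n q b * X n q i)
            + (g2 q (b i) * q ^ ((b i : ℤ) - 1) * q ^ (-((b i - 1 : ℕ) : ℤ)))
                • (Z n q i * yb n q (b - δ i)))) * xb n q c)) := by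
        rw [X_yb hq]
    _ = (q ^ (a i : ℤ) * q ^ (-(b i : ℤ))) • (zb n q a * (yb n q b * (X n q i * xb n q c)))
          + (q ^ (a i : ℤ) * (g2 q (b i) * q ^ ((b i : ℤ) - 1) * q ^ (-((b i - 1 : ℕ) : ℤ))))
              • (zb n q a * (Z n q i * (yb n q (b - δ i) * xb n q c))) := by
        simp only [add_mul, smul_mul_assoc, mul_add, mul_smul_comm, smul_smul, smul_add,
          mul_assoc]
    _ = (q ^ ((a i : ℤ) - (b i : ℤ))) • mon n q a b (c + δ i)
        + (q ^ (a i : ℤ) * g2 q (b i)) • mon n q (a + δ i) (b - δ i) c := by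
        rw [xb_succ, scal, ← zpow_add₀ hq]
        rw [show zb n q a * (yb n q b * xb n q (c + δ i)) = mon n q a b (c + δ i) from rfl]
        rw [show zb n q a * (Z n q i * (yb n q (b - δ i) * xb n q c))
            = mon n q (a + δ i) (b - δ i) c from by
          rw [← mul_assoc, ← (Z_zb_comm i a).eq, mul_assoc, ← mul_assoc, zb_succ, mon]]
        simp only [sub_eq_add_neg]

lemma zb_zero : zb n q 0 = 1 := by
  have : (fun j => Z n q j ^ (0 : Fin n → ℕ) j) = fun _ => (1 : H n q) := by
    funext j; simp
  rw [zb, this, ordProd]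
  simp

lemma yb_zero : yb n q 0 = 1 := by
  have : (fun j => Y n q j ^ (0 : Fin n → ℕ) j) = fun _ => (1 : H n q) := by
    funext j; simp
  rw [yb, this, ordProd]
  simp

lemma xb_zero : xb n q 0 = 1 := by
  have : (fun j => X n q j ^ (0 : Fin n → ℕ) j) = fun _ => (1 : H n q) := by
    funext j; simp
  rw [xb, this, ordProd]
  simp

lemma mon_zero : mon n q 0 0 0 = 1 := by
  rw [mon, zb_zero, yb_zero, xb_zero, one_mul, one_mul]

/-- The set of normally ordered monomials. -/
def WSet (n : ℕ) (q : ℂ) : Set (H n q) :=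
  Set.range fun t : Idx n => mon n q t.1 t.2.1 t.2.2

lemma gen_mul_mem {g : H n q}
    (hg : ∀ t : Idx n, g * mon n q t.1 t.2.1 t.2.2 ∈ Submodule.span ℂ (WSet n q)) :
    ∀ s ∈ Submodule.span ℂ (WSet n q), g * s ∈ Submodule.span ℂ (WSet n q) := by
  intro s hs
  refine Submodule.span_induction ?_ ?_ ?_ ?_ hs
  · rintro x ⟨t, rfl⟩
    exact hg t
  · rw [mul_zero]; exact Submodule.zero_mem _
  · intro x y _ _ hx hy
    rw [mul_add]; exact Submodule.add_mem _ hx hy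
  · intro r x _ hx
    rw [mul_smul_comm]; exact Submodule.smul_mem _ _ hx

lemma mon_mem (a b c : Fin n → ℕ) : mon n q a b c ∈ Submodule.span ℂ (WSet n q) :=
  Submodule.subset_span ⟨(a, b, c), rfl⟩

lemma mul_mem_spanW (hq : q ≠ 0) :
    ∀ h : H n q, ∀ s ∈ Submodule.span ℂ (WSet n q), h * s ∈ Submodule.span ℂ (WSet n q) := by
  intro h
  obtain ⟨u, rfl⟩ := RingQuot.mkAlgHom_surjective ℂ (Rel n q) h
  induction u using FreeAlgebra.induction with
  | grade0 r =>
    intro s hs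
    rw [AlgHom.commutes, ← Algebra.smul_def]
    exact Submodule.smul_mem _ _ hs
  | grade1 g =>
    rcases g with i | i | i
    · exact gen_mul_mem fun t => by
        rw [show RingQuot.mkAlgHom ℂ (Rel n q) (FreeAlgebra.ι ℂ (Sum.inl i)) = X n q i from rfl,
          X_mon hq]
        exact Submodule.add_mem _ (Submodule.smul_mem _ _ (mon_mem _ _ _))
          (Submodule.smul_mem _ _ (mon_mem _ _ _))
    · exact gen_mul_mem fun t => by
        rw [show RingQuot.mkAlgHom ℂ (Rel n q) (FreeAlgebra.ι ℂ (Sum.inr (Sum.inl i)))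
            = Y n q i from rfl, Y_mon]
        exact Submodule.smul_mem _ _ (mon_mem _ _ _)
    · exact gen_mul_mem fun t => by
        rw [show RingQuot.mkAlgHom ℂ (Rel n q) (FreeAlgebra.ι ℂ (Sum.inr (Sum.inr i)))
            = Z n q i from rfl, Z_mon]
        exact mon_mem _ _ _
  | mul u v ihu ihv =>
    intro s hs
    rw [map_mul, mul_assoc]
    exact ihu _ (ihv s hs)
  | add u v ihu ihv =>
    intro s hs
    rw [map_add, add_mul]
    exact Submodule.add_mem _ (ihu s hs) (ihv s hs)

lemma spanW_top (hq : q ≠ 0) : Submodule.span ℂ (WSet n q) = ⊤ := by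
  rw [Submodule.eq_top_iff']
  intro h
  have h1 : (1 : H n q) ∈ Submodule.span ℂ (WSet n q) := by
    rw [← mon_zero (n := n) (q := q)]
    exact mon_mem _ _ _
  simpa using mul_mem_spanW hq h 1 h1

end CMon

end QHeisenberg

namespace QHeisenberg

section Phi
variable {n : ℕ} {q : ℂ}

lemma opZ_pow (i : Fin n) (k : ℕ) (a b c : Fin n → ℕ) :
    ((opZ n i) ^ k) (e (a, b, c)) = e (a + k • δ i, b, c) := by
  induction k with
  | zero => simp
  | succ k ih =>
    rw [pow_succ', Module.End.mul_apply, ih, opZ_e, succ_nsmul, ← add_assoc]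

lemma opY_pow (i : Fin n) (k : ℕ) (b c : Fin n → ℕ) :
    ((opY n q i) ^ k) (e (0, b, c)) = e (0, b + k • δ i, c) := by
  induction k with
  | zero => simp
  | succ k ih =>
    rw [pow_succ', Module.End.mul_apply, ih, opY_e, succ_nsmul, ← add_assoc]
    simp

lemma opX_pow (i : Fin n) (k : ℕ) (c : Fin n → ℕ) :
    ((opX n q i) ^ k) (e (0, 0, c)) = e (0, 0, c + k • δ i) := by
  induction k with
  | zero => simp
  | succ k ih =>
    rw [pow_succ', Module.End.mul_apply, ih, opX_e, succ_nsmul, ← add_assoc]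
    simp

lemma listsum_apply {ι : Type*} (L : List ι) (F : ι → (Fin n → ℕ)) (k : Fin n) :
    (L.map F).sum k = (L.map fun j => F j k).sum := by
  induction L with
  | nil => rfl
  | cons j t ih => simp [ih]

lemma listsum_eval (v : Fin n → ℕ) :
    ((List.finRange n).map fun j => v j • δ j).sum = v := by
  funext k
  rw [listsum_apply]
  have : ((List.finRange n).map fun j => (v j • δ j) k) =
      (List.finRange n).map fun j => if k = j then v j else 0 := by
    refine List.map_congr_left fun j _ => ?_
    simp [δ, Pi.single_apply]
  rw [this, ← Fin.sum_univ_def]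
  simp [Finset.sum_ite_eq]

lemma prodZ_apply (a : Fin n → ℕ) (b c : Fin n → ℕ) :
    (((List.finRange n).map fun j => (opZ n j) ^ a j).prod) (e (0, b, c)) = e (a, b, c) := by
  suffices hyp : ∀ (L : List (Fin n)) (a0 : Fin n → ℕ),
      ((L.map fun j => (opZ n j) ^ a j).prod) (e (a0, b, c))
        = e (a0 + (L.map fun j => a j • δ j).sum, b, c) by
    have := hyp (List.finRange n) 0
    rwa [listsum_eval, zero_add] at this
  intro L
  induction L with
  | nil => simp
  | cons j t ih =>
    intro a0
    simp only [List.map_cons, List.prod_cons, Module.End.mul_apply, List.sum_cons, ih, opZ_pow]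
    rw [← add_assoc, add_comm (a0 + _)]
    rw [add_comm a0 (a j • δ j), add_assoc]

lemma prodY_apply (b c : Fin n → ℕ) :
    (((List.finRange n).map fun j => (opY n q j) ^ b j).prod) (e (0, 0, c)) = e (0, b, c) := by
  suffices hyp : ∀ (L : List (Fin n)) (b0 : Fin n → ℕ),
      ((L.map fun j => (opY n q j) ^ b j).prod) (e (0, b0, c))
        = e (0, b0 + (L.map fun j => b j • δ j).sum, c) by
    have := hyp (List.finRange n) 0
    rwa [listsum_eval, zero_add] at this
  intro L
  induction L with
  | nil => simp
  | cons j t ih =>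
    intro b0
    simp only [List.map_cons, List.prod_cons, Module.End.mul_apply, List.sum_cons, ih, opY_pow]
    rw [← add_assoc, add_comm (b0 + _)]
    rw [add_comm b0 (b j • δ j), add_assoc]

lemma prodX_apply (c : Fin n → ℕ) :
    (((List.finRange n).map fun j => (opX n q j) ^ c j).prod) (e (0, 0, 0)) = e (0, 0, c) := by
  suffices hyp : ∀ (L : List (Fin n)) (c0 : Fin n → ℕ),
      ((L.map fun j => (opX n q j) ^ c j).prod) (e (0, 0, c0))
        = e (0, 0, c0 + (L.map fun j => c j • δ j).sum) by
    have := hyp (List.finRange n) 0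
    rwa [listsum_eval, zero_add] at this
  intro L
  induction L with
  | nil => simp
  | cons j t ih =>
    intro c0
    simp only [List.map_cons, List.prod_cons, Module.End.mul_apply, List.sum_cons, ih, opX_pow]
    rw [← add_assoc, add_comm (c0 + _)]
    rw [add_comm c0 (c j • δ j), add_assoc]

/-- The evaluation map `h ↦ ρ(h)(e_{0,0,0})`. -/
def phi (n : ℕ) (q : ℂ) (hq : q ≠ 0) : H n q →ₗ[ℂ] MM n where
  toFun h := rho n q hq h (e (0, 0, 0))
  map_add' x y := by simp [map_add]
  map_smul' r x := by simp [map_smul]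

lemma phi_mul (hq : q ≠ 0) (h h' : H n q) :
    phi n q hq (h * h') = rho n q hq h (phi n q hq h') := by
  simp [phi, map_mul, Module.End.mul_apply]

lemma rho_zb (hq : q ≠ 0) (a : Fin n → ℕ) :
    rho n q hq (zb n q a) = ((List.finRange n).map fun j => (opZ n j) ^ a j).prod := by
  rw [zb, ordProd, map_list_prod, List.map_map]
  congr 1
  refine List.map_congr_left fun j _ => ?_
  simp [map_pow]

lemma rho_yb (hq : q ≠ 0) (b : Fin n → ℕ) :
    rho n q hq (yb n q b) = ((List.finRange n).map fun j => (opY n q j) ^ b j).prod := by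
  rw [yb, ordProd, map_list_prod, List.map_map]
  congr 1
  refine List.map_congr_left fun j _ => ?_
  simp [map_pow]

lemma rho_xb (hq : q ≠ 0) (c : Fin n → ℕ) :
    rho n q hq (xb n q c) = ((List.finRange n).map fun j => (opX n q j) ^ c j).prod := by
  rw [xb, ordProd, map_list_prod, List.map_map]
  congr 1
  refine List.map_congr_left fun j _ => ?_
  simp [map_pow]

lemma phi_mon (hq : q ≠ 0) (a b c : Fin n → ℕ) :
    phi n q hq (mon n q a b c) = e (a, b, c) := by
  rw [mon, phi_mul hq, phi_mul hq]
  show rho n q hq (zb n q a) (rho n q hq (yb n q b) (phi n q hq (xb n q c)))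
    = e (a, b, c)
  have hx : phi n q hq (xb n q c) = e (0, 0, c) := by
    show rho n q hq (xb n q c) (e (0, 0, 0)) = _
    rw [rho_xb hq, prodX_apply]
  rw [hx, rho_yb hq, prodY_apply, rho_zb hq, prodZ_apply]

/-- The section `ψ` of `φ`. -/
def psi (n : ℕ) (q : ℂ) : MM n →ₗ[ℂ] H n q :=
  Finsupp.lift (H n q) ℂ (Idx n) fun t => mon n q t.1 t.2.1 t.2.2

lemma psi_single (t : Idx n) (r : ℂ) :
    psi n q (Finsupp.single t r) = r • mon n q t.1 t.2.1 t.2.2 := by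
  rw [psi, Finsupp.lift_apply, Finsupp.sum_single_index]
  simp

lemma phi_psi (hq : q ≠ 0) : (phi n q hq) ∘ₗ (psi n q) = LinearMap.id := by
  refine Finsupp.lhom_ext fun t r => ?_
  rcases t with ⟨a, b, c⟩
  rw [LinearMap.comp_apply, psi_single, map_smul, phi_mon hq, LinearMap.id_apply]
  simp [e, Finsupp.smul_single]

lemma psi_surj (hq : q ≠ 0) : Function.Surjective (psi n q) := by
  intro h
  have hh : h ∈ LinearMap.range (psi n q) := by
    have h2 : Submodule.span ℂ (WSet n q) ≤ LinearMap.range (psi n q) := by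
      rw [Submodule.span_le]
      rintro x ⟨t, rfl⟩
      exact ⟨Finsupp.single t 1, by rw [psi_single, one_smul]⟩
    exact h2 (by rw [spanW_top hq]; trivial)
  exact hh

lemma phi_inj (hq : q ≠ 0) : Function.Injective (phi n q hq) := by
  intro x y hxy
  obtain ⟨u, rfl⟩ := psi_surj (n := n) hq x
  obtain ⟨v, rfl⟩ := psi_surj (n := n) hq y
  have h1 : phi n q hq (psi n q u) = u := by
    rw [← LinearMap.comp_apply, phi_psi hq, LinearMap.id_apply]
  have h2 : phi n q hq (psi n q v) = v := by
    rw [← LinearMap.comp_apply, phi_psi hq, LinearMap.id_apply]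
  rw [h1, h2] at hxy
  rw [hxy]

end Phi

end QHeisenberg

set_option synthInstance.maxHeartbeats 1000000
set_option maxHeartbeats 4000000

namespace QHeisenberg

section Final
variable {n : ℕ} {q : ℂ}

abbrev M0 (n : ℕ) := (Fin n → ℕ) →₀ ℂ

def emb (n : ℕ) (b c : Fin n → ℕ) : M0 n →ₗ[ℂ] MM n :=
  Finsupp.lmapDomain ℂ ℂ (fun a => (a, b, c))

lemma emb_single (b c a : Fin n → ℕ) (r : ℂ) :
    emb n b c (Finsupp.single a r) = Finsupp.single (a, b, c) r := by
  simp [emb, Finsupp.lmapDomain_apply, Finsupp.mapDomain_single]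

lemma emb_inj (b c : Fin n → ℕ) : Function.Injective (fun a : Fin n → ℕ => (a, b, c)) :=
  fun a a' h => congrArg Prod.fst h

lemma adjoin_struct (hq : q ≠ 0) {r : H n q} (hr : r ∈ adjoinZ n q) :
    ∃ u : M0 n →ₗ[ℂ] M0 n, ∀ b c : Fin n → ℕ,
      (rho n q hq r) ∘ₗ emb n b c = (emb n b c) ∘ₗ u := by
  refine Algebra.adjoin_induction ?_ ?_ ?_ ?_ hr
  · rintro x ⟨i, rfl⟩
    refine ⟨Finsupp.lmapDomain ℂ ℂ (· + δ i), fun b c => ?_⟩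
    refine Finsupp.lhom_ext fun a r => ?_
    simp only [LinearMap.comp_apply, emb_single, rho_Z, opZ, Finsupp.lmapDomain_apply,
      Finsupp.mapDomain_single]
  · intro r
    refine ⟨r • LinearMap.id, fun b c => ?_⟩
    refine LinearMap.ext fun v => ?_
    simp [AlgHom.commutes, Module.algebraMap_end_apply]
  · rintro x y _ _ ⟨u1, hu1⟩ ⟨u2, hu2⟩
    refine ⟨u1 + u2, fun b c => ?_⟩
    rw [map_add, LinearMap.add_comp, LinearMap.comp_add, hu1, hu2]
  · rintro x y _ _ ⟨u1, hu1⟩ ⟨u2, hu2⟩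
    refine ⟨u1 ∘ₗ u2, fun b c => ?_⟩
    rw [map_mul]
    show (rho n q hq x ∘ₗ rho n q hq y) ∘ₗ emb n b c = _
    rw [LinearMap.comp_assoc, hu2, ← LinearMap.comp_assoc, hu1, LinearMap.comp_assoc]

lemma adjoin_eval (hq : q ≠ 0) {r : H n q} (hr : r ∈ adjoinZ n q) :
    ∃ m0 : M0 n, ∀ b c : Fin n → ℕ, rho n q hq r (e (0, b, c)) = emb n b c m0 := by
  obtain ⟨u, hu⟩ := adjoin_struct hq hr
  refine ⟨u (Finsupp.single 0 1), fun b c => ?_⟩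
  have := LinearMap.congr_fun (hu b c) (Finsupp.single 0 1)
  simpa [LinearMap.comp_apply, emb_single, e] using this

/-- the candidate basis family -/
def vfam (n : ℕ) (q : ℂ) (bc : (Fin n → ℕ) × (Fin n → ℕ)) : H n q :=
  yb n q bc.1 * xb n q bc.2

lemma vfam_eq_mon (bc : (Fin n → ℕ) × (Fin n → ℕ)) :
    vfam n q bc = mon n q 0 bc.1 bc.2 := by
  rw [vfam, mon, zb_zero, one_mul]

lemma smul_eq_mul' (r : adjoinZ n q) (h : H n q) : r • h = (r : H n q) * h := by
  rw [Subalgebra.smul_def, smul_eq_mul]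

lemma vfam_li' (hq : q ≠ 0) (s : Finset ((Fin n → ℕ) × (Fin n → ℕ)))
    (g : (Fin n → ℕ) × (Fin n → ℕ) → adjoinZ n q)
    (hsum : ∑ bc ∈ s, g bc • vfam n q bc = 0) :
    ∀ i ∈ s, g i = 0 := by
  intro i hi
  have hmem : ∀ bc, ((g bc : H n q)) ∈ adjoinZ n q := fun bc => (g bc).2
  choose m0 hm0 using fun bc => adjoin_eval hq (hmem bc)
  have h0 : ∑ bc ∈ s, emb n bc.1 bc.2 (m0 bc) = 0 := by
    have := congrArg (phi n q hq) hsum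
    rw [map_sum, map_zero] at this
    rw [← this]
    refine Finset.sum_congr rfl fun bc _ => ?_
    rw [smul_eq_mul', phi_mul hq, vfam_eq_mon, phi_mon hq, hm0]
  have hkey : m0 i = 0 := by
    ext a
    have h2 := congrArg (fun F : MM n => F (a, i.1, i.2)) h0
    simp only [Finsupp.finset_sum_apply, Finsupp.coe_zero, Pi.zero_apply] at h2
    rw [Finset.sum_eq_single i] at h2
    · rw [emb, Finsupp.lmapDomain_apply,
        show ((a, i.1, i.2) : Idx n) = (fun a' => (a', i.1, i.2)) a from rfl,
        Finsupp.mapDomain_apply (emb_inj i.1 i.2)] at h2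
      simpa using h2
    · intro bc _ hbc
      have hnr : ((a, i.1, i.2) : Idx n) ∉ Set.range (fun a' : Fin n → ℕ => (a', bc.1, bc.2)) := by
        rintro ⟨a', ha'⟩
        apply hbc
        have h1 : ((bc.1, bc.2) : (Fin n → ℕ) × (Fin n → ℕ)) = (i.1, i.2) :=
          congrArg Prod.snd ha'
        exact Prod.ext (congrArg Prod.fst h1) (congrArg Prod.snd h1)
      simpa [emb, Finsupp.lmapDomain_apply] using
        Finsupp.mapDomain_notin_range (m0 bc) _ hnr
    · intro hnot
      exact absurd hi hnot
  have hphi : phi n q hq ((g i : H n q)) = 0 := by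
    have := hm0 i 0 0
    rw [hkey, map_zero] at this
    simpa [phi] using this
  have : (g i : H n q) = 0 := phi_inj hq (by rw [hphi, map_zero])
  exact Subtype.ext this

lemma zb_mem (a : Fin n → ℕ) : zb n q a ∈ adjoinZ n q := by
  rw [zb, ordProd]
  refine Subalgebra.list_prod_mem _ ?_
  intro x hx
  obtain ⟨j, _, rfl⟩ := List.mem_map.mp hx
  exact pow_mem (Algebra.subset_adjoin (Set.mem_range_self j)) _

lemma vfam_span (hq : q ≠ 0) (h : H n q) :
    h ∈ Submodule.span (adjoinZ n q) (Set.range (vfam n q)) := by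
  have hW : h ∈ Submodule.span ℂ (WSet n q) := by rw [spanW_top hq]; trivial
  refine Submodule.span_induction ?_ ?_ ?_ ?_ hW
  · rintro x ⟨⟨a, b, c⟩, rfl⟩
    have hmon : mon n q a b c = (⟨zb n q a, zb_mem a⟩ : adjoinZ n q) • vfam n q (b, c) := by
      rw [smul_eq_mul', vfam, mon]
    rw [show (fun t : Idx n => mon n q t.1 t.2.1 t.2.2) (a, b, c) = mon n q a b c from rfl, hmon]
    exact Submodule.smul_mem _ _ (Submodule.subset_span ⟨(b, c), rfl⟩)
  · exact Submodule.zero_mem _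
  · intro x y _ _ hx hy
    exact Submodule.add_mem _ hx hy
  · intro r x _ hx
    rw [← algebraMap_smul (adjoinZ n q) r x]
    exact Submodule.smul_mem _ _ hx

end Final

lemma exists_basis_of {A : Type*} [Ring A] [Algebra ℂ A] (S : Subalgebra ℂ A)
    {ι : Type*} (v : ι → A)
    (hli : ∀ (s : Finset ι) (g : ι → S), (∑ i ∈ s, g i • v i) = 0 → ∀ i ∈ s, g i = 0)
    (hsp : ∀ x : A, x ∈ Submodule.span S (Set.range v)) :
    ∃ b : Module.Basis ι S A, ∀ i, b i = v i := by
  have hli' : LinearIndependent S v := linearIndependent_iff'.mpr hli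
  exact ⟨Module.Basis.mk hli' (fun x _ => hsp x), fun i => Module.Basis.mk_apply _ _ i⟩

end QHeisenberg


namespace QHeisenberg

/-- For `n ≥ 1` and `q ≠ 0`, the algebra `𝔥_n(q)` is a free left module
over the subalgebra `Algebra.adjoin ℂ {z_1, …, z_n}`, with basis the monomials
`y^b x^c` indexed by pairs of multi-indices `(b, c)`. -/
theorem free_over_adjoin_z (n : ℕ) (hn : 1 ≤ n) (q : ℂ) (hq : q ≠ 0) :
    ∃ b : Module.Basis ((Fin n → ℕ) × (Fin n → ℕ)) (adjoinZ n q) (H n q),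
      ∀ bc : (Fin n → ℕ) × (Fin n → ℕ),
        b bc = ordProd n (fun i => Y n q i ^ bc.1 i) *
            ordProd n (fun i => X n q i ^ bc.2 i) := by
  obtain ⟨b, hb⟩ := exists_basis_of (adjoinZ n q) (vfam n q) (vfam_li' hq) (vfam_span hq)
  exact ⟨b, fun bc => hb bc⟩

end QHeisenberg
end
end

section
/- Let n ≥ 1 and q ∈ ℂ nonzero. Then the subalgebra of 𝔥_n(q) generated by z_1, …, z_n is isomorphic as a ℂ-algebra to the polynomial algebra in n commuting variables: Algebra.adjoin ℂ {z_1, …, z_n} ≅ MvPolynomial (Fin n) ℂ, via an isomorphism sending the i-th variable to z_i. -/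
/-!
`𝔥_n(q)` acts on `ℂ[t_1, …, t_n, s_1, …, s_n]` with `z_i` acting as multiplication by `s_i`,
`x_i` as multiplication by `t_i` and `y_i` as `s_i` times a `q`-deformed `∂/∂t_i` (the last
two twisted by a power of `q` in the `s_i`-degree). Through this representation a polynomial
relation among the `z_i` would be one among the `s_i`, so the `z_i` are algebraically
independent; as they commute, evaluation at them is an isomorphism onto the subalgebra they
generate.
-/

noncomputable section

open scoped BigOperators

open MvPolynomial

open scoped IsMulCommutative in
theorem exists_algEquiv_adjoin_range_of_injective {R A B ι : Type*} [CommSemiring R]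
    [Semiring A] [Algebra R A] [Semiring B] [Algebra R B] {z : ι → A}
    (hz : ∀ i j, Commute (z i) (z j)) (ψ : A →ₐ[R] B) (f : MvPolynomial ι R →ₐ[R] B)
    (hf : Function.Injective f) (hψ : ∀ i, ψ (z i) = f (X i)) :
    ∃ e : MvPolynomial ι R ≃ₐ[R] Algebra.adjoin R (Set.range z), ∀ i, (e (X i) : A) = z i := by
  have := Algebra.isMulCommutative_adjoin R (s := Set.range z) (by
    rintro _ ⟨i, rfl⟩ _ ⟨j, rfl⟩; exact (hz i j).eq)
  let z' (i : ι) : Algebra.adjoin R (Set.range z) := ⟨z i, Algebra.subset_adjoin ⟨i, rfl⟩⟩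
  have hinj : Function.Injective (aeval (R := R) z') := by
    have hcomp : (ψ.comp (Algebra.adjoin R (Set.range z)).val).comp (aeval z') = f :=
      algHom_ext fun i => by simp [z', hψ]
    rw [← hcomp, AlgHom.coe_comp] at hf
    exact hf.of_comp
  have hsurj : Function.Surjective (aeval (R := R) z') := by
    have hrange : Set.range z' = (↑) ⁻¹' Set.range z := by
      ext ⟨a, ha⟩
      simp [z', Subtype.ext_iff]
    rw [← AlgHom.range_eq_top, ← Algebra.adjoin_range_eq_range_aeval, hrange]
    exact Algebra.adjoin_adjoin_coe_preimage
  exact ⟨AlgEquiv.ofBijective _ ⟨hinj, hsurj⟩, fun i => congrArg Subtype.val (aeval_X z' i)⟩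

namespace MvPolynomial

variable {σ R : Type*} [CommSemiring R]

def weightedShift (w : (σ →₀ ℕ) → R) (s : (σ →₀ ℕ) → σ →₀ ℕ) :
    Module.End R (MvPolynomial σ R) :=
  (basisMonomials σ R).constr R fun d => w d • monomial (s d) 1

@[simp]
theorem weightedShift_monomial (w : (σ →₀ ℕ) → R) (s : (σ →₀ ℕ) → σ →₀ ℕ) (d : σ →₀ ℕ) :
    weightedShift w s (monomial d 1) = w d • monomial (s d) 1 := by
  simpa [weightedShift, coe_basisMonomials] using
    (basisMonomials σ R).constr_basis R (fun d => w d • monomial (s d) (1 : R)) d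

theorem linearMap_ext_monomial_one {M : Type*} [AddCommMonoid M] [Module R M]
    {f g : MvPolynomial σ R →ₗ[R] M} (h : ∀ d, f (monomial d 1) = g (monomial d 1)) : f = g :=
  (basisMonomials σ R).ext fun d => by simpa [coe_basisMonomials] using h d

theorem weightedShift_mul_weightedShift (w₁ w₂ : (σ →₀ ℕ) → R) (s₁ s₂ : (σ →₀ ℕ) → σ →₀ ℕ) :
    weightedShift w₁ s₁ * weightedShift w₂ s₂ =
      weightedShift (fun d => w₂ d * w₁ (s₂ d)) (s₁ ∘ s₂) :=
  linearMap_ext_monomial_one fun d => by simp [smul_smul]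

theorem weightedShift_add_weightedShift (w₁ w₂ : (σ →₀ ℕ) → R) (s : (σ →₀ ℕ) → σ →₀ ℕ) :
    weightedShift w₁ s + weightedShift w₂ s = weightedShift (w₁ + w₂) s :=
  linearMap_ext_monomial_one fun d => by simp [add_smul]

theorem smul_weightedShift (c : R) (w : (σ →₀ ℕ) → R) (s : (σ →₀ ℕ) → σ →₀ ℕ) :
    c • weightedShift w s = weightedShift (c • w) s :=
  linearMap_ext_monomial_one fun d => by simp [smul_smul]

theorem weightedShift_congr {w₁ w₂ : (σ →₀ ℕ) → R} {s₁ s₂ : (σ →₀ ℕ) → σ →₀ ℕ}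
    (hw : w₁ = w₂) (hs : ∀ d, w₁ d ≠ 0 → s₁ d = s₂ d) :
    weightedShift w₁ s₁ = weightedShift w₂ s₂ :=
  linearMap_ext_monomial_one fun d => by
    subst hw
    by_cases h : w₁ d = 0
    · simp [h]
    · simp [hs d h]

theorem lmul_X_eq_weightedShift (i : σ) :
    Algebra.lmul R (MvPolynomial σ R) (X i) = weightedShift 1 (· + Finsupp.single i 1) :=
  linearMap_ext_monomial_one fun d => by simp [X, monomial_mul, add_comm]

end MvPolynomial

namespace QHeisenberg

open Finsupp

variable {ι : Type*} (q : ℂ)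

/-- `yCoeff q m = -q (1 + q² + ⋯ + q^{2(m-1)})`: the recursion is what
`x_i y_i - q⁻¹ y_i x_i = z_i` forces on `t_i^m`. -/
def yCoeff : ℕ → ℂ
  | 0 => 0
  | m + 1 => q ^ 2 * yCoeff m - q

-- The variables `Sum.inl i` and `Sum.inr i` play the roles of `t_i` and `s_i`.
def xOp (i : ι) : Module.End ℂ (MvPolynomial (ι ⊕ ι) ℂ) :=
  weightedShift (fun d => q ^ d (.inr i)) (· + single (.inl i) 1)

def yOp (i : ι) : Module.End ℂ (MvPolynomial (ι ⊕ ι) ℂ) :=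
  weightedShift (fun d => q⁻¹ ^ d (.inr i) * yCoeff q (d (.inl i)))
    (fun d => d - single (.inl i) 1 + single (.inr i) 1)

def zOp (i : ι) : Module.End ℂ (MvPolynomial (ι ⊕ ι) ℂ) :=
  weightedShift 1 (· + single (.inr i) 1)

theorem commute_xOp_xOp (i j : ι) : Commute (xOp q i) (xOp q j) := by
  simp only [Commute, SemiconjBy, xOp, weightedShift_mul_weightedShift]
  congr 1
  · funext d; simp [mul_comm]
  · funext d; simp [add_right_comm]

theorem commute_yOp_yOp (i j : ι) : Commute (yOp q i) (yOp q j) := by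
  classical
  rcases eq_or_ne i j with rfl | hij
  · rfl
  simp only [Commute, SemiconjBy, yOp, weightedShift_mul_weightedShift]
  congr 1
  · funext d; simp [hij, hij.symm]; ring
  · funext d; ext v; simp [single_apply]; grind

theorem commute_zOp_zOp (i j : ι) : Commute (zOp i) (zOp j) := by
  simp only [Commute, SemiconjBy, zOp, weightedShift_mul_weightedShift]
  congr 1
  funext d; simp [add_right_comm]

theorem xOp_mul_zOp (i : ι) : xOp q i * zOp i = q • (zOp i * xOp q i) := by
  simp only [xOp, zOp, weightedShift_mul_weightedShift, smul_weightedShift]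
  congr 1
  · funext d; simp [pow_succ, mul_comm]
  · funext d; simp [add_right_comm]

theorem yOp_mul_zOp (i : ι) : yOp q i * zOp i = q⁻¹ • (zOp i * yOp q i) := by
  classical
  simp only [yOp, zOp, weightedShift_mul_weightedShift, smul_weightedShift]
  congr 1
  · funext d; simp [pow_succ]; ring
  · funext d; ext v; simp [single_apply]; grind

theorem xOp_mul_yOp {q : ℂ} (hq : q ≠ 0) (i : ι) :
    xOp q i * yOp q i = q⁻¹ • (yOp q i * xOp q i) + zOp i := by
  classical
  have hshift : (fun d => d - single (Sum.inl i) 1 + single (Sum.inr i) 1) ∘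
      (· + single (Sum.inl i) 1) = (· + single (Sum.inr i) 1) := by
    funext d; simp
  simp only [xOp, yOp, zOp, weightedShift_mul_weightedShift, hshift, smul_weightedShift,
    weightedShift_add_weightedShift]
  apply weightedShift_congr
  · funext d; simp [yCoeff]; field_simp; ring
  -- The truncated subtraction in the shift of `yOp` only matters where `t_i` is absent,
  -- and there the weight `yCoeff q 0` vanishes.
  · intro d hd
    have : d (.inl i) ≠ 0 := by rintro h; simp [h, yCoeff] at hd
    ext v; simp [single_apply]; grind

theorem commute_xOp_yOp {i j : ι} (hij : i ≠ j) : Commute (xOp q i) (yOp q j) := by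
  classical
  simp only [Commute, SemiconjBy, xOp, yOp, weightedShift_mul_weightedShift]
  congr 1
  · funext d; simp [hij, hij.symm]; ring
  · funext d; ext v; simp [single_apply]; grind

theorem commute_xOp_zOp {i j : ι} (hij : i ≠ j) : Commute (xOp q i) (zOp j) := by
  simp only [Commute, SemiconjBy, xOp, zOp, weightedShift_mul_weightedShift]
  congr 1
  · funext d; simp [hij.symm]
  · funext d; simp [add_right_comm]

theorem commute_yOp_zOp {i j : ι} (hij : i ≠ j) : Commute (yOp q i) (zOp j) := by
  classical
  simp only [Commute, SemiconjBy, yOp, zOp, weightedShift_mul_weightedShift]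
  congr 1
  · funext d; simp [hij.symm]
  · funext d; ext v; simp [single_apply]; grind

def generatorOp (n : ℕ) (q : ℂ) : GenIdx n → Module.End ℂ (MvPolynomial (Fin n ⊕ Fin n) ℂ) :=
  Sum.elim (xOp q) (Sum.elim (yOp q) zOp)

theorem lift_generatorOp_of_rel {n : ℕ} {q : ℂ} (hq : q ≠ 0) ⦃a b : FreeAlgebra ℂ (GenIdx n)⦄
    (h : Rel n q a b) :
    FreeAlgebra.lift ℂ (generatorOp n q) a = FreeAlgebra.lift ℂ (generatorOp n q) b := by
  cases h <;> simp only [fX, fY, fZ, map_mul, map_add, map_smul, FreeAlgebra.lift_ι_apply,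
    generatorOp, Sum.elim_inl, Sum.elim_inr]
  case xx i j => exact commute_xOp_xOp q i j
  case yy i j => exact commute_yOp_yOp q i j
  case zz i j => exact commute_zOp_zOp i j
  case xz i => exact xOp_mul_zOp q i
  case yz i => exact yOp_mul_zOp q i
  case xy i => exact xOp_mul_yOp hq i
  case xyne hij => exact commute_xOp_yOp q hij
  case xzne hij => exact commute_xOp_zOp q hij
  case yzne hij => exact commute_yOp_zOp q hij

def mvPolynomialRep {n : ℕ} {q : ℂ} (hq : q ≠ 0) :
    H n q →ₐ[ℂ] Module.End ℂ (MvPolynomial (Fin n ⊕ Fin n) ℂ) :=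
  RingQuot.liftAlgHom ℂ ⟨FreeAlgebra.lift ℂ (generatorOp n q), lift_generatorOp_of_rel hq⟩

theorem mvPolynomialRep_Z {n : ℕ} {q : ℂ} (hq : q ≠ 0) (i : Fin n) :
    mvPolynomialRep hq (Z n q i) = Algebra.lmul ℂ _ (MvPolynomial.X (Sum.inr i)) := by
  rw [mvPolynomialRep, Z, RingQuot.liftAlgHom_mkAlgHom_apply, fZ, FreeAlgebra.lift_ι_apply,
    lmul_X_eq_weightedShift]
  rfl

theorem commute_Z_Z (n : ℕ) (q : ℂ) (i j : Fin n) : Commute (Z n q i) (Z n q j) := by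
  have h := RingQuot.mkAlgHom_rel ℂ (Rel.zz (q := q) i j)
  rw [map_mul, map_mul] at h
  exact h

theorem adjoin_z_iso_mvPolynomial_general (n : ℕ) (q : ℂ) (hq : q ≠ 0) :
    ∃ e : MvPolynomial (Fin n) ℂ ≃ₐ[ℂ] adjoinZ n q,
      ∀ i : Fin n, (e (MvPolynomial.X i) : H n q) = Z n q i :=
  exists_algEquiv_adjoin_range_of_injective (commute_Z_Z n q) (mvPolynomialRep hq)
    ((Algebra.lmul ℂ _).comp (rename Sum.inr))
    (Algebra.lmul_injective.comp (rename_injective _ Sum.inr_injective))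
    fun i => by simp [mvPolynomialRep_Z]

/-- For `n ≥ 1` and `q ≠ 0`, the subalgebra of `𝔥_n(q)` generated by
`z_1, …, z_n` is isomorphic, as a `ℂ`-algebra, to the polynomial algebra in `n` commuting
variables, via an isomorphism sending the `i`-th variable to `z_i`. -/
theorem adjoin_z_iso_mvPolynomial (n : ℕ) (hn : 1 ≤ n) (q : ℂ) (hq : q ≠ 0) :
    ∃ e : MvPolynomial (Fin n) ℂ ≃ₐ[ℂ] adjoinZ n q,
      ∀ i : Fin n, (e (MvPolynomial.X i) : H n q) = Z n q i :=
  adjoin_z_iso_mvPolynomial_general n q hq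

end QHeisenberg
end
end
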